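/- For every n ≥ 1, r^{(n)}(X) = (−1)^{n−1}·r^{(n)}(−X−1) as polynomials in ℤ[X]. -/
import Mathlib


open Polynomial

/-- h(i) = 0, -1, -1, 0, 1, 1 according as i = 0,1,2,3,4,5 (mod 6). -/
def hcoef (i : ℕ) : ℤ :=
  match i % 6 with
  | 0 => 0 | 1 => -1 | 2 => -1 | 3 => 0 | 4 => 1 | _ => 1

/-- g(i) = 1, -m, -m-1, -1, m, m+1 according as i = 0,1,2,3,4,5 (mod 6). -/
def gcoef (m : ℚ) (i : ℕ) : ℚ :=
  match i % 6 with
  | 0 => 1 | 1 => -m | 2 => -m - 1 | 3 => -1 | 4 => m | _ => m + 1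

/-- f_m^{(n)}(X) = sum_{i=0}^n C(n,i) X^i g(n-i). -/
noncomputable def fpol (m : ℚ) (n : ℕ) : ℚ[X] :=
  ∑ i ∈ Finset.range (n + 1), C ((n.choose i : ℚ) * gcoef m (n - i)) * X ^ i

/-- r^{(n)}(X) = sum_{i=0}^n C(n,i) X^i h(n-i). -/
noncomputable def rpol (n : ℕ) : ℤ[X] :=
  ∑ i ∈ Finset.range (n + 1), C ((n.choose i : ℤ) * hcoef (n - i)) * X ^ i


-- h facts
lemma hcoef_mod (x : ℕ) : hcoef x = hcoef (x % 6) := by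
  unfold hcoef; rw [Nat.mod_mod]

lemma hcoef_rec (x : ℕ) : hcoef (x + 5) = hcoef x - hcoef (x + 1) := by
  rw [hcoef_mod (x+5), hcoef_mod x, hcoef_mod (x+1), Nat.add_mod x 5, Nat.add_mod x 1]
  have h6 : x % 6 < 6 := Nat.mod_lt _ (by norm_num)
  interval_cases h : x % 6 <;> decide

lemma hcoef_five_mul (m : ℕ) : hcoef (5 * m) = - hcoef m := by
  rw [hcoef_mod (5*m), hcoef_mod m, Nat.mul_mod]
  have h6 : m % 6 < 6 := Nat.mod_lt _ (by norm_num)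
  interval_cases h : m % 6 <;> decide

def Asum (a m : ℕ) : ℤ := ∑ j ∈ Finset.range (m+1), (m.choose j : ℤ) * (-1)^j * hcoef (j + a)

lemma Asum_succ (a m : ℕ) : Asum a (m+1) = Asum a m - Asum (a+1) m := by
  unfold Asum
  rw [Finset.sum_range_succ' (fun j => ((m+1).choose j : ℤ) * (-1)^j * hcoef (j + a))]
  have key : ∀ j, (((m+1).choose (j+1) : ℤ)) = (m.choose j : ℤ) + (m.choose (j+1) : ℤ) := by
    intro j; exact_mod_cast congrArg Nat.cast (Nat.choose_succ_succ m j)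
  have e1 : ∑ j ∈ Finset.range (m+1), (((m+1).choose (j+1) : ℤ)) * (-1)^(j+1) * hcoef ((j+1) + a)
      = -(∑ j ∈ Finset.range (m+1), (m.choose j : ℤ) * (-1)^j * hcoef (j + (a+1)))
        - ∑ j ∈ Finset.range (m+1), (m.choose (j+1) : ℤ) * (-1)^j * hcoef ((j+1) + a) := by
    rw [← Finset.sum_neg_distrib, ← Finset.sum_sub_distrib]
    apply Finset.sum_congr rfl
    intro j _
    rw [key j]
    have : j + (a+1) = (j+1) + a := by omega
    rw [this]
    ring
  rw [e1]
  have e2 : ∑ j ∈ Finset.range (m+1), (m.choose j : ℤ) * (-1)^j * hcoef (j + a)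
      = ((m+1).choose 0 : ℤ) * (-1)^0 * hcoef (0 + a)
        + ∑ j ∈ Finset.range (m+1), (m.choose (j+1) : ℤ) * (-1)^(j+1) * hcoef ((j+1) + a) := by
    have h2 : ∑ j ∈ Finset.range (m+2), (m.choose j : ℤ) * (-1)^j * hcoef (j + a)
        = ∑ j ∈ Finset.range (m+1), (m.choose j : ℤ) * (-1)^j * hcoef (j + a) := by
      rw [Finset.sum_range_succ, Nat.choose_succ_self]
      simp
    rw [← h2, Finset.sum_range_succ' (fun j => (m.choose j : ℤ) * (-1)^j * hcoef (j + a))]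
    simp [add_comm]
  rw [e2]
  have e3 : ∑ j ∈ Finset.range (m+1), (m.choose (j+1) : ℤ) * (-1)^(j+1) * hcoef ((j+1) + a)
      = -(∑ j ∈ Finset.range (m+1), (m.choose (j+1) : ℤ) * (-1)^j * hcoef ((j+1) + a)) := by
    rw [← Finset.sum_neg_distrib]
    apply Finset.sum_congr rfl
    intro j _; ring
  rw [e3]
  ring

lemma Asum_eq (m : ℕ) : ∀ a, Asum a m = hcoef (a + 5*m) := by
  induction m with
  | zero => intro a; simp [Asum]
  | succ m ih =>
    intro a
    rw [Asum_succ, ih a, ih (a+1)]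
    have h1 : a + 5*(m+1) = (a + 5*m) + 5 := by ring
    have h2 : a + 1 + 5*m = (a + 5*m) + 1 := by ring
    rw [h1, h2, hcoef_rec]

lemma rpol_eval_zero (m : ℕ) : (rpol m).eval 0 = hcoef m := by
  unfold rpol
  rw [eval_finset_sum]
  rw [Finset.sum_eq_single 0]
  · simp
  · intro i _ hi
    simp [zero_pow hi]
  · intro h; simp at h

lemma rpol_eval_neg_one (m : ℕ) : (rpol m).eval (-1) = (-1)^(m+1) * hcoef m := by
  unfold rpol
  rw [eval_finset_sum]
  simp only [eval_mul, eval_C, eval_pow, eval_X]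
  rw [← Finset.sum_range_reflect]
  have e1 : ∀ i ∈ Finset.range (m+1),
      (m.choose (m + 1 - 1 - i) : ℤ) * hcoef (m - (m + 1 - 1 - i)) * (-1) ^ (m + 1 - 1 - i)
      = (-1)^m * ((m.choose i : ℤ) * (-1)^i * hcoef (i + 0)) := by
    intro i hi
    rw [Finset.mem_range] at hi
    have hle : i ≤ m := by omega
    have h1 : m + 1 - 1 - i = m - i := by omega
    have h2 : m - (m - i) = i := by omega
    rw [h1, h2, Nat.choose_symm hle]
    have h3 : ((-1:ℤ))^(m-i) * (-1)^i = (-1)^m := by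
      rw [← pow_add, Nat.sub_add_cancel hle]
    have h4 : ((-1:ℤ))^(m-i) = (-1)^m * (-1)^i := by
      have hsq : ((-1:ℤ)^i) * ((-1:ℤ)^i) = 1 := by
        rw [← pow_add, ← two_mul, pow_mul]; norm_num
      calc ((-1:ℤ))^(m-i) = (-1)^(m-i) * ((-1)^i * (-1)^i) := by rw [hsq]; ring
        _ = (-1)^m * (-1)^i := by rw [← mul_assoc, h3]
    rw [h4, add_zero]
    ring
  rw [Finset.sum_congr rfl e1, ← Finset.mul_sum]
  have : ∑ i ∈ Finset.range (m+1), (m.choose i : ℤ) * (-1)^i * hcoef (i + 0) = Asum 0 m := rfl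
  rw [this, Asum_eq, zero_add, hcoef_five_mul]
  ring

lemma rpol_deriv (n : ℕ) : derivative (rpol (n+1)) = C ((n:ℤ)+1) * rpol n := by
  unfold rpol
  rw [derivative_sum]
  simp only [derivative_C_mul, derivative_X_pow]
  rw [Finset.sum_range_succ' (fun i => C (((n+1).choose i : ℤ) * hcoef (n+1-i)) * (C (i:ℤ) * X ^ (i-1)))]
  simp only [Nat.cast_zero, map_zero, zero_mul, mul_zero, add_zero]
  rw [Finset.mul_sum]
  apply Finset.sum_congr rfl
  intro j _
  have h1 : n + 1 - (j+1) = n - j := by omega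
  have h2 : ((n+1).choose (j+1) : ℤ) * ((j:ℤ)+1) = ((n:ℤ)+1) * (n.choose j : ℤ) := by
    have := Nat.add_one_mul_choose_eq n j
    have : ((n+1) * n.choose j : ℤ) = ((n+1).choose (j+1) * (j+1) : ℤ) := by exact_mod_cast congrArg Nat.cast this
    push_cast at this ⊢
    linarith
  rw [h1]
  rw [show (j + 1 - 1) = j from rfl]
  have h3 : (((n+1).choose (j+1):ℤ)) * hcoef (n-j) * ((j:ℤ)+1)
      = ((n:ℤ)+1) * ((n.choose j : ℤ) * hcoef (n-j)) := by
    linear_combination hcoef (n-j) * h2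
  push_cast
  simp only [← mul_assoc, ← C_mul]
  rw [h3, mul_assoc]

lemma rpol_one : rpol 1 = C (-1) := by
  unfold rpol
  rw [Finset.sum_range_succ, Finset.sum_range_succ, Finset.sum_range_zero]
  simp [show hcoef 0 = 0 from rfl, show hcoef 1 = -1 from rfl]

theorem stmt6 (n : ℕ) (hn : 1 ≤ n) :
    rpol n = (-1 : ℤ[X]) ^ (n - 1) * (rpol n).comp (-X - 1) := by
  induction n, hn using Nat.le_induction with
  | base => simp [rpol_one]
  | succ n hn ih =>
    obtain ⟨k, rfl⟩ : ∃ k, n = k + 1 := ⟨n - 1, by omega⟩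
    set n := k + 1 with hnk
    have h1 : ((-1 : ℤ[X]))^(k+k) = 1 := by
      rw [← two_mul, pow_mul]; norm_num
    have hone : ((-1 : ℤ[X]))^k * ((-1 : ℤ[X]))^k = 1 := by
      rw [← pow_add]; exact h1
    set p := rpol (n+1) with hp
    have hcomp : (rpol n).comp (-X - 1) = (-1 : ℤ[X])^k * rpol n := by
      calc (rpol n).comp (-X - 1)
          = ((-1:ℤ[X])^(k+k)) * (rpol n).comp (-X - 1) := by rw [h1, one_mul]
        _ = (-1:ℤ[X])^k * ((-1:ℤ[X])^k * (rpol n).comp (-X - 1)) := by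
            rw [pow_add, mul_assoc]
        _ = (-1:ℤ[X])^k * rpol n := by
            congr 1
            conv_rhs => rw [ih]
            rw [show n - 1 = k by omega]
    have hd : derivative p = derivative ((-1 : ℤ[X])^n * p.comp (-X - 1)) := by
      rw [hp, rpol_deriv]
      rw [show ((-1 : ℤ[X]))^n = C ((-1:ℤ)^n) by simp]
      rw [derivative_C_mul, derivative_comp, rpol_deriv]
      rw [derivative_sub, derivative_neg, derivative_X, derivative_one]
      rw [mul_comp, C_comp, hcomp]
      rw [show (C ((-1:ℤ)^n) : ℤ[X]) = (-1 : ℤ[X])^n by simp]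
      rw [hnk, pow_succ]
      linear_combination (-(C ((n:ℤ)+1) * rpol n)) * hone
    have h0 : p.eval 0 = ((-1 : ℤ[X])^n * p.comp (-X - 1)).eval 0 := by
      rw [eval_mul, eval_comp]
      simp only [eval_pow, eval_neg, eval_one, eval_sub, eval_X]
      norm_num
      rw [hp, rpol_eval_zero, rpol_eval_neg_one, ← mul_assoc, ← pow_add]
      rw [show n + (n+1+1) = 2*(n+1) by ring, pow_mul]
      norm_num
    have hz : p - (-1 : ℤ[X])^n * p.comp (-X - 1) = 0 := by
      have hder : derivative (p - (-1 : ℤ[X])^n * p.comp (-X - 1)) = 0 := by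
        rw [derivative_sub, ← hd, sub_self]
      have hc := eq_C_of_derivative_eq_zero hder
      rw [hc, coeff_zero_eq_eval_zero, eval_sub, ← h0, sub_self, map_zero]
    rw [show n + 1 - 1 = n by omega]
    exact sub_eq_zero.mp hz
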